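/- For c > 2 set γ(c) = √((c − 2)/c) and define N(c) = 12 γ(c)³ (7 γ(c)⁶ + 93 γ(c)⁴ + 105 γ(c)² + 35) / (35 (γ(c)² − 1)⁴). Then the function c ↦ N(c) is strictly monotonically increasing on the interval (2, ∞). -/

import Mathlib

/-!
Since `γ(c)² = 1 - 2/c`, the denominator is `35 (γ² - 1)⁴ = 560 / c⁴`, so on `(2, ∞)`
`N(c) = (3/140) · γ³ (7γ⁶ + 93γ⁴ + 105γ² + 35) · c⁴`. Both factors are positive and strictly
increasing in `c`: the first because `γ` is, the second trivially.
-/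

open Set

lemma StrictMonoOn.mul_of_nonneg {α M₀ : Type*} [Preorder α] [MulZeroClass M₀] [Preorder M₀]
    [PosMulStrictMono M₀] [MulPosMono M₀] {f g : α → M₀} {s : Set α}
    (hf : StrictMonoOn f s) (hg : StrictMonoOn g s)
    (hf₀ : ∀ x ∈ s, 0 ≤ f x) (hg₀ : ∀ x ∈ s, 0 ≤ g x) :
    StrictMonoOn (f * g) s :=
  fun _ ha _ hb hab ↦ mul_lt_mul'' (hf ha hb hab) (hg ha hb hab) (hf₀ _ ha) (hg₀ _ ha)

lemma strictMonoOn_sqrt_sub_two_div : StrictMonoOn (fun c : ℝ ↦ √((c - 2) / c)) (Ici 2) := by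
  have hdiv : StrictMonoOn (fun c : ℝ ↦ (c - 2) / c) (Ici 2) := by
    intro a ha b hb hab
    simp only [mem_Ici] at ha hb
    rw [div_lt_div_iff₀ (by linarith) (by linarith)]
    linarith
  refine Real.strictMonoOn_sqrt.comp hdiv fun c hc ↦ ?_
  simp only [mem_Ici] at hc ⊢
  exact div_nonneg (by linarith) (by linarith)

lemma sq_sqrt_sub_two_div_sub_one_pow_four {c : ℝ} (hc : 2 ≤ c) :
    (√((c - 2) / c) ^ 2 - 1) ^ 4 = 16 / c ^ 4 := by
  rw [Real.sq_sqrt (div_nonneg (by linarith) (by linarith))]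
  field_simp
  ring

lemma strictMonoOn_momentum_poly :
    StrictMonoOn (fun t : ℝ ↦ t ^ 3 * (7 * t ^ 6 + 93 * t ^ 4 + 105 * t ^ 2 + 35)) (Ici 0) := by
  intro s hs t _ hst
  simp only [mem_Ici] at hs
  have hpow : ∀ n ≠ 0, s ^ n < t ^ n := fun n hn ↦ pow_lt_pow_left₀ hst hs hn
  refine mul_lt_mul'' (hpow 3 (by norm_num)) ?_ (by positivity) (by positivity)
  linarith [hpow 6 (by norm_num), hpow 4 (by norm_num), hpow 2 (by norm_num)]

theorem stmt_3 (γ N : ℝ → ℝ)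
    (hγ : ∀ c, γ c = Real.sqrt ((c - 2) / c))
    (hN : ∀ c, N c = 12 * γ c ^ 3 * (7 * γ c ^ 6 + 93 * γ c ^ 4 + 105 * γ c ^ 2 + 35) /
      (35 * (γ c ^ 2 - 1) ^ 4)) :
    StrictMonoOn N (Set.Ioi (2 : ℝ)) := by
  set p : ℝ → ℝ := fun t ↦ t ^ 3 * (7 * t ^ 6 + 93 * t ^ 4 + 105 * t ^ 2 + 35)
  have hγ_eq : γ = fun c ↦ √((c - 2) / c) := funext hγ
  have hN_eq : EqOn (fun c ↦ 3 / 140 * ((p ∘ γ) c * c ^ 4)) N (Ioi 2) := fun c hc ↦ by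
    have hden : (γ c ^ 2 - 1) ^ 4 = 16 / c ^ 4 := by
      rw [hγ]
      exact sq_sqrt_sub_two_div_sub_one_pow_four (le_of_lt hc)
    rw [hN, hden]
    simp only [Function.comp_apply, p]
    field_simp
    ring
  have hpγ : StrictMonoOn (p ∘ γ) (Ioi 2) := by
    rw [hγ_eq]
    exact strictMonoOn_momentum_poly.comp (strictMonoOn_sqrt_sub_two_div.mono Ioi_subset_Ici_self)
      fun c _ ↦ Real.sqrt_nonneg _
  have hpow : StrictMonoOn (· ^ 4 : ℝ → ℝ) (Ioi 2) :=
    (pow_left_strictMonoOn₀ (by norm_num)).mono fun c (hc : 2 < c) ↦ (by linarith : (0 : ℝ) ≤ c)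
  refine StrictMonoOn.congr ?_ hN_eq
  refine (strictMono_mul_left_of_pos (by norm_num : (0 : ℝ) < 3 / 140)).comp_strictMonoOn ?_
  refine hpγ.mul_of_nonneg hpow (fun c _ ↦ ?_) fun c _ ↦ by positivity
  simp only [Function.comp_apply, p, hγ]
  positivity
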